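/- Let p be a prime ideal of a commutative Noetherian ring R. Then p is a trace ideal of R (i.e., p = tr_R(p)) if and only if the localization R_p is not a discrete valuation ring. -/

import Mathlib

/-- The trace ideal of an `R`-module `M`. -/
def traceIdeal (R : Type*) [CommRing R] (M : Type*) [AddCommGroup M] [Module R M] : Ideal R :=
  ⨆ f : M →ₗ[R] R, LinearMap.range f

/-!
For `f : p →ₗ[R] R` and `a, b ∈ p` we have `a * f b = f (a * b) = b * f a`. So if `f x` is a unit,
every `a ∈ p` equals `x * (f a / f x)` and `x` is a non-zero-divisor. In a Noetherian local ring
this shows that a linear form on the maximal ideal with a unit value exists iff the maximal ideal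
is generated by a non-zero-divisor, i.e. iff the ring is a DVR (by Krull's intersection theorem
every nonzero element is then a unit times a power of the generator). Since `p` is finitely
presented, `Hom_R(p, R)` localizes to `Hom_{R_p}(p R_p, R_p)`, and `tr(p) = p` says that no
`f : p → R` takes a value outside `p`, a condition that can be checked after localizing at `p`.
-/

open IsLocalRing

theorem le_traceIdeal {R : Type*} [CommRing R] (I : Ideal R) : I ≤ traceIdeal R I :=
  I.range_subtype.ge.trans (le_iSup (fun f : I →ₗ[R] R ↦ LinearMap.range f) I.subtype)

theorem traceIdeal_eq_self_iff {R : Type*} [CommRing R] (I : Ideal R) :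
    traceIdeal R I = I ↔ ∀ f : I →ₗ[R] R, LinearMap.range f ≤ I :=
  ⟨fun h f ↦ (le_iSup (fun f : I →ₗ[R] R ↦ LinearMap.range f) f).trans h.le,
    fun h ↦ (iSup_le h).antisymm (le_traceIdeal I)⟩

theorem Ideal.mul_apply_comm {R : Type*} [CommRing R] {I : Ideal R} (f : I →ₗ[R] R) (a b : I) :
    (a : R) * f b = b * f a := by
  rw [← smul_eq_mul, ← map_smul, ← smul_eq_mul, ← map_smul]
  congr 1
  exact Subtype.ext (mul_comm _ _)

theorem IsLocalRing.exists_linearMap_maximalIdeal_of_isDiscreteValuationRing {A : Type*}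
    [CommRing A] [IsDomain A] [IsDiscreteValuationRing A] :
    ∃ g : maximalIdeal A →ₗ[A] A, ¬ LinearMap.range g ≤ maximalIdeal A := by
  obtain ⟨ϖ, hϖ⟩ := IsDiscreteValuationRing.exists_irreducible A
  let e := (LinearEquiv.ofEq _ _ hϖ.maximalIdeal_eq).trans
    (LinearEquiv.toSpanNonzeroSingleton A A ϖ hϖ.ne_zero).symm
  refine ⟨e.toLinearMap, ?_⟩
  rw [LinearEquiv.range, top_le_iff]
  exact (maximalIdeal.isMaximal A).ne_top

section NoetherianLocalRing

variable {A : Type*} [CommRing A] [IsNoetherianRing A] [IsLocalRing A]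

theorem IsLocalRing.exists_eq_pow_mul_of_maximalIdeal_eq_span {x : A}
    (hx : maximalIdeal A = Ideal.span {x}) {a : A} (ha : a ≠ 0) :
    ∃ (n : ℕ) (u : A), IsUnit u ∧ a = x ^ n * u := by
  have hfin : FiniteMultiplicity x a := by
    by_contra h
    simp only [FiniteMultiplicity.def, not_exists, not_not] at h
    refine ha (Ideal.mem_bot.mp ?_)
    rw [← Ideal.iInf_pow_eq_bot_of_isLocalRing _ (maximalIdeal.isMaximal A).ne_top, hx,
      Ideal.mem_iInf]
    intro n
    rw [Ideal.span_singleton_pow, Ideal.mem_span_singleton]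
    exact (pow_dvd_pow x n.le_succ).trans (h n)
  obtain ⟨u, hau, hu⟩ := hfin.exists_eq_pow_mul_and_not_dvd
  refine ⟨_, u, notMem_maximalIdeal.mp ?_, hau⟩
  rwa [hx, Ideal.mem_span_singleton]

theorem IsLocalRing.isDomain_of_maximalIdeal_eq_span {x : A} (hx : x ∈ nonZeroDivisors A)
    (h : maximalIdeal A = Ideal.span {x}) : IsDomain A := by
  have : NoZeroDivisors A := by
    refine ⟨fun {a b} hab ↦ or_iff_not_imp_left.mpr fun ha ↦ by_contra fun hb ↦ ?_⟩
    obtain ⟨n, u, hu, rfl⟩ := exists_eq_pow_mul_of_maximalIdeal_eq_span h ha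
    obtain ⟨m, v, hv, rfl⟩ := exists_eq_pow_mul_of_maximalIdeal_eq_span h hb
    have : u * v * x ^ (n + m) = 0 := by rw [← hab]; ring
    exact (hu.mul hv).ne_zero (mem_nonZeroDivisors_iff_right.mp (pow_mem hx _) _ this)
  exact NoZeroDivisors.to_isDomain A

theorem IsLocalRing.isDiscreteValuationRing_of_maximalIdeal_eq_span [IsDomain A] {x : A}
    (hx : x ≠ 0) (h : maximalIdeal A = Ideal.span {x}) : IsDiscreteValuationRing A := by
  have : (maximalIdeal A).IsPrincipal := ⟨x, h⟩
  have : IsPrincipalIdealRing A :=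
    ((tfae_of_isNoetherianRing_of_isLocalRing_of_isDomain A).out 4 0).mp this
  exact { not_a_field' := by rwa [h, Ne, Ideal.span_singleton_eq_bot] }

theorem IsLocalRing.exists_isDiscreteValuationRing_of_linearMap
    (g : maximalIdeal A →ₗ[A] A) (hg : ¬ LinearMap.range g ≤ maximalIdeal A) :
    ∃ _ : IsDomain A, IsDiscreteValuationRing A := by
  obtain ⟨_, ⟨x, rfl⟩, hgx⟩ := SetLike.not_le_iff_exists.mp hg
  have hu : IsUnit (g x) := notMem_maximalIdeal.mp hgx
  have hspan : maximalIdeal A = Ideal.span {(x : A)} := by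
    refine le_antisymm (fun a ha ↦ Ideal.mem_span_singleton.mpr ⟨g ⟨a, ha⟩ * hu.unit⁻¹, ?_⟩)
      ((Ideal.span_singleton_le_iff_mem _).mpr x.2)
    rw [← mul_assoc, Ideal.mul_apply_comm g x ⟨a, ha⟩, mul_assoc, IsUnit.mul_val_inv, mul_one]
  have hreg : (x : A) ∈ nonZeroDivisors A := by
    refine mem_nonZeroDivisors_iff_right.mpr fun r hr ↦ hu.mul_left_eq_zero.mp ?_
    rw [← smul_eq_mul, ← map_smul, show r • x = 0 from Subtype.ext hr, map_zero]
  have := isDomain_of_maximalIdeal_eq_span hreg hspan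
  exact ⟨this, isDiscreteValuationRing_of_maximalIdeal_eq_span (nonZeroDivisors.ne_zero hreg) hspan⟩

theorem IsLocalRing.exists_linearMap_maximalIdeal_iff :
    (∃ g : maximalIdeal A →ₗ[A] A, ¬ LinearMap.range g ≤ maximalIdeal A) ↔
      ∃ _ : IsDomain A, IsDiscreteValuationRing A :=
  ⟨fun ⟨g, hg⟩ ↦ exists_isDiscreteValuationRing_of_linearMap g hg,
    fun ⟨_, _⟩ ↦ exists_linearMap_maximalIdeal_of_isDiscreteValuationRing⟩

end NoetherianLocalRing

section Localization

variable {R : Type*} [CommRing R] (p : Ideal R) [p.IsPrime]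

local notation "Rₚ" => Localization.AtPrime p

theorem Ideal.range_mapExtendScalars_le_map_iff (f : p →ₗ[R] R) :
    LinearMap.range (IsLocalizedModule.mapExtendScalars p.primeCompl (Algebra.idealMap Rₚ p)
      (Algebra.linearMap R Rₚ) Rₚ f) ≤ p.map (algebraMap R Rₚ) ↔ LinearMap.range f ≤ p := by
  have hrange := LinearMap.localized'_range_eq_range_localizedMap Rₚ p.primeCompl
    (Algebra.idealMap Rₚ p) (Algebra.linearMap R Rₚ) f
  rw [Ideal.localized'_eq_map Rₚ p.primeCompl] at hrange
  change LinearMap.range (LinearMap.extendScalarsOfIsLocalization p.primeCompl Rₚ _) ≤ _ ↔ _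
  rw [← hrange, Ideal.map_le_iff_le_comap, Localization.AtPrime.map_eq_maximalIdeal,
    ← Ideal.under_def, Localization.AtPrime.under_maximalIdeal]

theorem Ideal.exists_linearMap_range_not_le_iff_atPrime [IsNoetherianRing R] :
    (∃ f : p →ₗ[R] R, ¬ LinearMap.range f ≤ p) ↔
      ∃ g : maximalIdeal Rₚ →ₗ[Rₚ] Rₚ, ¬ LinearMap.range g ≤ maximalIdeal Rₚ := by
  rw [← Localization.AtPrime.map_eq_maximalIdeal]
  let φ := IsLocalizedModule.mapExtendScalars p.primeCompl (Algebra.idealMap Rₚ p)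
    (Algebra.linearMap R Rₚ) Rₚ
  constructor
  · rintro ⟨f, hf⟩
    exact ⟨φ f, (range_mapExtendScalars_le_map_iff p f).not.mpr hf⟩
  · rintro ⟨g, hg⟩
    have : Module.FinitePresentation R p := Module.finitePresentation_of_finite R p
    obtain ⟨⟨f, s⟩, hfs⟩ := IsLocalizedModule.surj p.primeCompl φ g
    refine ⟨f, (range_mapExtendScalars_le_map_iff p f).not.mp fun hf ↦ hg ?_⟩
    rintro _ ⟨y, rfl⟩
    rw [← Ideal.unit_mul_mem_iff_mem _ (IsLocalization.map_units Rₚ s), ← Algebra.smul_def]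
    exact hf ⟨y, congr($hfs y).symm⟩

end Localization

/-- A prime ideal `p` of a commutative Noetherian ring `R` is a trace ideal
(i.e. `p = tr_R(p)`) if and only if the localization `R_p` is not a discrete
valuation ring. -/
theorem prime_isTraceIdeal_iff_not_dvr (R : Type*) [CommRing R] [IsNoetherianRing R]
    (p : Ideal R) [p.IsPrime] :
    traceIdeal R p = p ↔
      ¬ ∃ _h : IsDomain (Localization.AtPrime p),
          IsDiscreteValuationRing (Localization.AtPrime p) := by
  rw [traceIdeal_eq_self_iff, ← IsLocalRing.exists_linearMap_maximalIdeal_iff,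
    ← Ideal.exists_linearMap_range_not_le_iff_atPrime, not_exists_not]
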